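/- Let φ : ℝ⁴ → ℝ be smooth, with coordinates (t, x, y, z) and Minkowski metric η = diag(−1, 1, 1, 1) used to raise indices; write (∂φ)² = η^{μν} ∂_μφ ∂_νφ and □φ = η^{μν} ∂_μ∂_νφ. Consider the second-order Lagrangian L = −½ φ (∂φ)² □φ and its Euler–Lagrange expression computed by the standard second-order formula E[φ] = (∂L/∂φ)[φ] − ∂_μ( (∂L/∂φ_{,μ})[φ] ) + ∂_μ∂_ν( (∂L/∂φ_{,μν})[φ] ). Then, as smooth functions on ℝ⁴, E[φ] = φ( (□φ)² − (∂^μ∂^νφ)(∂_μ∂_νφ) ) − 2 (∂_μ∂_νφ)(∂^μφ)(∂^νφ). -/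

import Mathlib

open scoped BigOperators

noncomputable section

/-- Partial derivative of a function on `ℝ⁴` in the coordinate direction `μ`. -/
def pd (μ : Fin 4) (f : (Fin 4 → ℝ) → ℝ) : (Fin 4 → ℝ) → ℝ :=
  fun x => fderiv ℝ f x (Pi.single μ 1)

/-- The (inverse) Minkowski metric `diag(−1,1,1,1)` (diagonal entries). -/
def η : Fin 4 → ℝ := fun μ => if μ = 0 then -1 else 1

/-- The second-order jet space of a scalar field on `ℝ⁴`:
the variables `(φ, φ_{,μ}, φ_{,μν})`. -/
abbrev Jet2 := ℝ × (Fin 4 → ℝ) × (Fin 4 → Fin 4 → ℝ)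

/-- The second-order jet prolongation of a scalar field `φ`. -/
def jet2 (φ : (Fin 4 → ℝ) → ℝ) (x : Fin 4 → ℝ) : Jet2 :=
  (φ x, fun μ => pd μ φ x, fun μ ν => pd μ (pd ν φ) x)

/-- Symmetrized direction for `∂/∂φ_{,μν}`, so that
`∂φ_{,ρσ}/∂φ_{,μν} = δ^{(μ}_ρ δ^{ν)}_σ`. -/
def esym (μ ν : Fin 4) : Fin 4 → Fin 4 → ℝ :=
  fun ρ σ => (1 / 2 : ℝ) *
    ((if ρ = μ ∧ σ = ν then (1 : ℝ) else 0) + (if ρ = ν ∧ σ = μ then (1 : ℝ) else 0))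

/-- The Euler–Lagrange expression of a second-order scalar Lagrangian `Λ` along `φ`,
computed by the standard second-order formula
`E[φ] = (∂Λ/∂φ)[φ] − ∂_μ((∂Λ/∂φ_{,μ})[φ]) + ∂_μ∂_ν((∂Λ/∂φ_{,μν})[φ])`. -/
def ELscalar (Λ : Jet2 → ℝ) (φ : (Fin 4 → ℝ) → ℝ) : (Fin 4 → ℝ) → ℝ :=
  fun x =>
    fderiv ℝ Λ (jet2 φ x) ((1 : ℝ), 0, 0)
    - (∑ μ : Fin 4, pd μ (fun y => fderiv ℝ Λ (jet2 φ y) ((0 : ℝ), Pi.single μ 1, 0)) x)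
    + ∑ μ : Fin 4, ∑ ν : Fin 4,
        pd μ (pd ν (fun y => fderiv ℝ Λ (jet2 φ y) ((0 : ℝ), 0, esym μ ν))) x

/-- The Horndeski-type scalar Lagrangian `L = −½ φ (∂φ)² □φ` as a jet function,
with `(∂φ)² = η^{μν}φ_{,μ}φ_{,ν}` and `□φ = η^{μν}φ_{,μν}`. -/
def Lscal : Jet2 → ℝ :=
  fun w => -(1 / 2 : ℝ) * w.1 * (∑ μ : Fin 4, η μ * w.2.1 μ * w.2.1 μ) *
    (∑ μ : Fin 4, η μ * w.2.2 μ μ)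

/-!
On jets, `∂L/∂φ = -½ (∂φ)² □φ`, `∂L/∂φ_{,μ} = -η^μ φ φ_{,μ} □φ` and, because `esym` symmetrises
the second-derivative slot, `∂L/∂φ_{,μν} = -½ η^μ δ_{μν} φ (∂φ)²`. Substituting `jet2 φ` and
expanding the outer derivatives by the Leibniz rule, the terms `±½ (∂φ)² □φ` cancel and the two
families of third derivatives, `φ ∂^μφ ∂_μ□φ` and `-φ ∂^ρφ □∂_ρφ`, cancel by the symmetry of mixed
partial derivatives; what remains is the stated second-order expression.
-/

open Finset

section PartialDerivative

variable {f g : (Fin 4 → ℝ) → ℝ} {μ ν : Fin 4}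

@[fun_prop]
theorem ContDiff.pd (hf : ContDiff ℝ (⊤ : ℕ∞) f) (μ : Fin 4) : ContDiff ℝ (⊤ : ℕ∞) (pd μ f) :=
  (hf.fderiv_right (by exact_mod_cast le_rfl)).clm_apply contDiff_const

theorem pd_const (c : ℝ) : pd μ (fun _ => c) = fun _ => 0 := by
  ext y
  simp [pd]

theorem pd_add (hf : Differentiable ℝ f) (hg : Differentiable ℝ g) :
    pd μ (fun y => f y + g y) = fun y => pd μ f y + pd μ g y := by
  ext y
  simp [pd, fderiv_fun_add (hf y) (hg y)]

theorem pd_mul (hf : Differentiable ℝ f) (hg : Differentiable ℝ g) :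
    pd μ (fun y => f y * g y) = fun y => pd μ f y * g y + f y * pd μ g y := by
  ext y
  simp [pd, fderiv_fun_mul (hf y) (hg y), add_comm, mul_comm]

theorem pd_const_mul (c : ℝ) : pd μ (fun y => c * f y) = fun y => c * pd μ f y := by
  ext y
  simp [pd, ← smul_eq_mul, ← Pi.smul_def, fderiv_const_smul_field]

theorem pd_sum {ι : Type*} (s : Finset ι) {F : ι → (Fin 4 → ℝ) → ℝ}
    (hF : ∀ i ∈ s, Differentiable ℝ (F i)) :
    pd μ (fun y => ∑ i ∈ s, F i y) = fun y => ∑ i ∈ s, pd μ (F i) y := by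
  ext y
  simp [pd, fderiv_fun_sum fun i hi => hF i hi y]

theorem pd_comm (hf : ContDiff ℝ 2 f) : pd μ (pd ν f) = pd ν (pd μ f) := by
  ext x
  have hdf : Differentiable ℝ (fderiv ℝ f) :=
    (hf.fderiv_right (m := 1) (by norm_num)).differentiable (by norm_num)
  have hpd : ∀ a b, pd a (pd b f) x = fderiv ℝ (fderiv ℝ f) x (Pi.single a 1) (Pi.single b 1) := by
    intro a b
    show fderiv ℝ (fun y => fderiv ℝ f y (Pi.single b 1)) x (Pi.single a 1) = _
    simp [fderiv_clm_apply (hdf x) (differentiableAt_const _)]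
  rw [hpd, hpd]
  exact hf.contDiffAt.isSymmSndFDerivAt (by simp [minSmoothness_of_isRCLikeNormedField]) _ _

theorem pd_pd_mul (hf : ContDiff ℝ (⊤ : ℕ∞) f) (hg : ContDiff ℝ (⊤ : ℕ∞) g) :
    pd μ (pd ν (fun y => f y * g y)) = fun y => pd μ (pd ν f) y * g y + pd ν f y * pd μ g y
      + (pd μ f y * pd ν g y + f y * pd μ (pd ν g) y) := by
  simp (disch := fun_prop (disch := simp)) only [pd_mul, pd_add]

end PartialDerivative

/-- `(∂φ)² = η^{μν} φ_{,μ} φ_{,ν}` as a function on jets. -/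
def jetGradSq (w : Jet2) : ℝ := ∑ μ, η μ * w.2.1 μ * w.2.1 μ

/-- `□φ = η^{μν} φ_{,μν}` as a function on jets. -/
def jetBox (w : Jet2) : ℝ := ∑ μ, η μ * w.2.2 μ μ

@[fun_prop]
theorem contDiff_jetGradSq : ContDiff ℝ (⊤ : ℕ∞) jetGradSq := by
  unfold jetGradSq
  fun_prop

@[fun_prop]
theorem contDiff_jetBox : ContDiff ℝ (⊤ : ℕ∞) jetBox := by
  unfold jetBox
  fun_prop

@[fun_prop]
theorem contDiff_jet2 {φ : (Fin 4 → ℝ) → ℝ} (hφ : ContDiff ℝ (⊤ : ℕ∞) φ) :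
    ContDiff ℝ (⊤ : ℕ∞) (jet2 φ) := by
  unfold jet2
  fun_prop

theorem jetBox_esym (μ ν : Fin 4) : jetBox (0, 0, esym μ ν) = if μ = ν then η μ else 0 := by
  rcases eq_or_ne μ ν with rfl | h
  · simp [jetBox, esym, ← two_mul]
  · have : ∀ ρ, ¬(ρ = μ ∧ ρ = ν) := fun ρ ⟨h1, h2⟩ => h (h1 ▸ h2)
    simp [jetBox, esym, h, this, and_comm (a := _ = ν)]

theorem fderiv_Lscal_apply (w v : Jet2) :
    fderiv ℝ Lscal w v = -(1 / 2) * (v.1 * jetGradSq w * jetBox w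
      + 2 * w.1 * (∑ μ, η μ * w.2.1 μ * v.2.1 μ) * jetBox w + w.1 * jetGradSq w * jetBox v) := by
  unfold Lscal
  simp (disch := fun_prop) only [fderiv_fun_mul, fderiv_fun_sum, fderiv.fst, fderiv.snd,
    fderiv_apply, fderiv_fun_const, fderiv_fun_id]
  have hdot : ∑ μ, (η μ * w.2.1 μ * v.2.1 μ + w.2.1 μ * (η μ * v.2.1 μ))
      = 2 * ∑ μ, η μ * w.2.1 μ * v.2.1 μ := by
    rw [mul_sum]
    exact sum_congr rfl fun _ _ => by ring
  simp [jetGradSq, jetBox, hdot]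
  ring

theorem fderiv_Lscal_field (w : Jet2) :
    fderiv ℝ Lscal w (1, 0, 0) = -(1 / 2) * (jetGradSq w * jetBox w) := by
  simp [fderiv_Lscal_apply, jetBox]

theorem fderiv_Lscal_grad (w : Jet2) (μ : Fin 4) :
    fderiv ℝ Lscal w (0, Pi.single μ 1, 0) = -η μ * (w.1 * w.2.1 μ * jetBox w) := by
  simp [fderiv_Lscal_apply, jetBox, Pi.single_apply]
  ring

theorem fderiv_Lscal_hess (w : Jet2) (μ ν : Fin 4) :
    fderiv ℝ Lscal w (0, 0, esym μ ν)
      = -(1 / 2) * (if μ = ν then η μ else 0) * (w.1 * jetGradSq w) := by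
  rw [fderiv_Lscal_apply, jetBox_esym]
  split_ifs <;> simp
  ring

theorem ELscalar_Lscal (φ : (Fin 4 → ℝ) → ℝ) (x : Fin 4 → ℝ) :
    ELscalar Lscal φ x = -(1 / 2) * (jetGradSq (jet2 φ x) * jetBox (jet2 φ x))
      + ∑ μ, η μ * pd μ (fun y => φ y * pd μ φ y * jetBox (jet2 φ y)) x
      - ∑ μ, 1 / 2 * η μ * pd μ (pd μ (fun y => φ y * jetGradSq (jet2 φ y))) x := by
  simp only [ELscalar, fderiv_Lscal_field, fderiv_Lscal_grad, fderiv_Lscal_hess, pd_const_mul]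
  simp only [neg_mul, sum_neg_distrib, sub_neg_eq_add, mul_ite, ite_mul, mul_zero, zero_mul, sum_ite_eq,
    mem_univ, if_true, jet2]
  ring

section Field

variable {φ : (Fin 4 → ℝ) → ℝ}

theorem pd_jetGradSq_jet2 (hφ : ContDiff ℝ (⊤ : ℕ∞) φ) (ν : Fin 4) :
    pd ν (fun y => jetGradSq (jet2 φ y))
      = fun y => 2 * ∑ ρ, η ρ * pd ρ φ y * pd ν (pd ρ φ) y := by
  simp only [jetGradSq, jet2]
  simp (disch := fun_prop (disch := simp)) only [pd_sum, pd_mul, pd_const, zero_mul, zero_add]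
  ext y
  rw [mul_sum]
  exact sum_congr rfl fun _ _ => by ring

theorem pd_jetBox_jet2 (hφ : ContDiff ℝ (⊤ : ℕ∞) φ) (ν : Fin 4) :
    pd ν (fun y => jetBox (jet2 φ y)) = fun y => ∑ ρ, η ρ * pd ν (pd ρ (pd ρ φ)) y := by
  simp only [jetBox, jet2]
  simp (disch := fun_prop (disch := simp)) only [pd_sum, pd_const_mul]

theorem pd_pd_jetGradSq_jet2 (hφ : ContDiff ℝ (⊤ : ℕ∞) φ) (μ : Fin 4) :
    pd μ (pd μ (fun y => jetGradSq (jet2 φ y))) = fun y =>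
      2 * ∑ ρ, η ρ * (pd μ (pd ρ φ) y ^ 2 + pd ρ φ y * pd ρ (pd μ (pd μ φ)) y) := by
  have hcomm : ∀ ρ, pd μ (pd μ (pd ρ φ)) = pd ρ (pd μ (pd μ φ)) := fun ρ => by
    rw [pd_comm (hφ.of_le (WithTop.coe_le_coe.mpr le_top)),
      pd_comm ((hφ.pd μ).of_le (WithTop.coe_le_coe.mpr le_top))]
  rw [pd_jetGradSq_jet2 hφ]
  simp (disch := fun_prop (disch := simp)) only [pd_const_mul, pd_sum, pd_mul, hcomm]
  ext y
  congr 1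
  exact sum_congr rfl fun _ _ => by ring

end Field

/-- **Euler–Lagrange expression of `L = −½ φ (∂φ)² □φ`** (Section 3.6):
`E[φ] = φ((□φ)² − (∂^μ∂^νφ)(∂_μ∂_νφ)) − 2(∂_μ∂_νφ)(∂^μφ)(∂^νφ)`
as smooth functions on `ℝ⁴`. -/
theorem euler_lagrange_of_cubic_horndeski
    (φ : (Fin 4 → ℝ) → ℝ) (hφ : ContDiff ℝ (⊤ : ℕ∞) φ) :
    ∀ x : Fin 4 → ℝ,
      ELscalar Lscal φ x
      = φ x * ((∑ μ : Fin 4, η μ * pd μ (pd μ φ) x) ^ 2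
            - ∑ μ : Fin 4, ∑ ν : Fin 4,
                η μ * η ν * pd μ (pd ν φ) x * pd μ (pd ν φ) x)
        - 2 * ∑ μ : Fin 4, ∑ ν : Fin 4,
            η μ * η ν * pd μ (pd ν φ) x * pd μ φ x * pd ν φ x := by
  intro x
  rw [ELscalar_Lscal]
  -- Separate passes: `simp` rewrites inner `pd`s first, which would pre-empt the second-order rules.
  simp only [pd_pd_mul (g := fun y => jetGradSq (jet2 φ y)) hφ (by fun_prop)]
  simp (disch := fun_prop (disch := simp)) only [pd_mul]
  simp only [pd_pd_jetGradSq_jet2 hφ]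
  simp only [pd_jetGradSq_jet2 hφ, pd_jetBox_jet2 hφ]
  simp only [jetGradSq, jetBox, jet2, Fin.sum_univ_four]
  ring

end
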